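/- Let m₊, m₋ ∈ ℝ, let x₀ ∈ ℝ³, and let x, y : J → ℝ³ be differentiable functions on an interval J ⊆ ℝ with x(t) ≠ −x₀ and x(t) ≠ x₀ for all t, satisfying the Hamilton equations of the two-centre problem: x′(t) = y(t) and y′(t) = −m₊·(x(t)+x₀)/‖x(t)+x₀‖³ − m₋·(x(t)−x₀)/‖x(t)−x₀‖³. Then the function t ↦ 𝒩(x(t), y(t)) is constant on J, where 𝒩(x,y) = ‖x × y‖² + (x₀ · y)² + 2·(x · x₀)·( m₊/‖x+x₀‖ − m₋/‖x−x₀‖ ). -/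

import Mathlib

/-!
Along a solution, `d/dt ‖x‖ = ⟪x, y⟫ / ‖x‖`, so the time derivative of `𝒩` is a rational
expression in the inner products of `x`, `y`, `x₀` and the two distances `‖x ± x₀‖`. After
substituting Newton's equation, the terms carrying `m₊` add up to
`2 m₊ ⟪x₀, y⟫ (1 / ‖x + x₀‖ - ‖x + x₀‖² / ‖x + x₀‖³)`, which vanishes once `‖x + x₀‖²` is
expanded; likewise for `m₋`. A function with zero derivative on a convex set is constant.
-/

open scoped RealInnerProductSpace

/-- Cross product on `EuclideanSpace ℝ (Fin 3)`. -/
noncomputable def cross3 (a b : EuclideanSpace ℝ (Fin 3)) : EuclideanSpace ℝ (Fin 3) :=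
  (EuclideanSpace.equiv (Fin 3) ℝ).symm
    (crossProduct (EuclideanSpace.equiv (Fin 3) ℝ a) (EuclideanSpace.equiv (Fin 3) ℝ b))

/-- The Euler first integral `𝒩(x,y)` of the two-centre problem with centres `±x₀`. -/
noncomputable def EulerN (mp mm : ℝ) (x₀ x y : EuclideanSpace ℝ (Fin 3)) : ℝ :=
  ‖cross3 x y‖ ^ 2 + ⟪x₀, y⟫ ^ 2 +
    2 * ⟪x, x₀⟫ * (mp / ‖x + x₀‖ - mm / ‖x - x₀‖)

theorem norm_cross3_sq (a b : EuclideanSpace ℝ (Fin 3)) :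
    ‖cross3 a b‖ ^ 2 = ‖a‖ ^ 2 * ‖b‖ ^ 2 - ⟪a, b⟫ ^ 2 := by
  simp only [← real_inner_self_eq_norm_sq, EuclideanSpace.inner_eq_star_dotProduct, cross3]
  simp [cross_dot_cross, dotProduct_comm, sq]
  rfl

theorem Convex.is_const_of_hasDerivAt_eq_zero {E : Type*} [NormedAddCommGroup E]
    [NormedSpace ℝ E] {s : Set ℝ} {f : ℝ → E} (hs : Convex ℝ s)
    (hf : ∀ t ∈ s, HasDerivAt f 0 t) {a b : ℝ} (ha : a ∈ s) (hb : b ∈ s) : f a = f b := by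
  have := hs.norm_image_sub_le_of_norm_hasDerivWithin_le (fun t ht => (hf t ht).hasDerivWithinAt)
    (C := 0) (fun _ _ => norm_zero.le) ha hb
  rw [zero_mul, norm_le_zero_iff, sub_eq_zero] at this
  exact this.symm

section InnerProductSpace

variable {F : Type*} [NormedAddCommGroup F] [InnerProductSpace ℝ F]

theorem HasDerivAt.norm {f : ℝ → F} {f' : F} {t : ℝ} (hf : HasDerivAt f f' t) (h0 : f t ≠ 0) :
    HasDerivAt (‖f ·‖) (⟪f t, f'⟫ / ‖f t‖) t := by
  have h0' : ‖f t‖ ≠ 0 := norm_ne_zero_iff.2 h0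
  have := hf.norm_sq.sqrt (pow_ne_zero 2 h0')
  simp only [Real.sqrt_sq (norm_nonneg _)] at this
  convert this using 1
  field_simp

theorem HasDerivAt.const_div_norm (c : ℝ) {f : ℝ → F} {f' : F} {t : ℝ} (hf : HasDerivAt f f' t)
    (h0 : f t ≠ 0) : HasDerivAt (fun s => c / ‖f s‖) (-(c * ⟪f t, f'⟫) / ‖f t‖ ^ 3) t := by
  have h0' : ‖f t‖ ≠ 0 := norm_ne_zero_iff.2 h0
  refine ((hasDerivAt_const t c).div (hf.norm h0) h0').congr_deriv ?_
  field_simp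
  ring

/-- `EulerN` with `‖x × y‖²` replaced by `‖x‖² ‖y‖² - ⟪x, y⟫²` (Lagrange's identity), which makes
sense in any real inner product space. -/
noncomputable def eulerIntegral (mp mm : ℝ) (x₀ x y : F) : ℝ :=
  ‖x‖ ^ 2 * ‖y‖ ^ 2 - ⟪x, y⟫ ^ 2 + ⟪x₀, y⟫ ^ 2 + 2 * ⟪x, x₀⟫ * (mp / ‖x + x₀‖ - mm / ‖x - x₀‖)

noncomputable def twoCentreForce (mp mm : ℝ) (x₀ x : F) : F :=
  (-mp / ‖x + x₀‖ ^ 3) • (x + x₀) + (-mm / ‖x - x₀‖ ^ 3) • (x - x₀)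

theorem hasDerivAt_eulerIntegral {mp mm : ℝ} {x₀ a : F} {x y : ℝ → F} {t : ℝ}
    (hx : HasDerivAt x (y t) t) (hy : HasDerivAt y a t) (hadd : x t + x₀ ≠ 0)
    (hsub : x t - x₀ ≠ 0) :
    HasDerivAt (fun s => eulerIntegral mp mm x₀ (x s) (y s))
      (2 * (‖x t‖ ^ 2 * ⟪y t, a⟫ - ⟪x t, y t⟫ * ⟪x t, a⟫ + ⟪x₀, y t⟫ * ⟪x₀, a⟫) +
        2 * ⟪x₀, y t⟫ * (mp / ‖x t + x₀‖ - mm / ‖x t - x₀‖) -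
        2 * ⟪x t, x₀⟫ * (mp * ⟪x t + x₀, y t⟫ / ‖x t + x₀‖ ^ 3 -
          mm * ⟪x t - x₀, y t⟫ / ‖x t - x₀‖ ^ 3)) t := by
  have hradd := (hx.add_const x₀).const_div_norm mp hadd
  have hrsub := (hx.sub_const x₀).const_div_norm mm hsub
  have hx₀ := hasDerivAt_const t x₀
  refine ((((hx.norm_sq.mul hy.norm_sq).sub ((hx.inner ℝ hy).pow 2)).add
    ((hx₀.inner ℝ hy).pow 2)).add
      (((hx.inner ℝ hx₀).const_mul 2).mul (hradd.sub hrsub))).congr_deriv ?_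
  simp only [Pi.sub_apply, inner_zero_left, inner_zero_right, real_inner_self_eq_norm_sq,
    real_inner_comm x₀ (y t)]
  ring

theorem hasDerivAt_eulerIntegral_of_twoCentre {mp mm : ℝ} {x₀ : F} {x y : ℝ → F} {t : ℝ}
    (hx : HasDerivAt x (y t) t) (hy : HasDerivAt y (twoCentreForce mp mm x₀ (x t)) t)
    (hadd : x t + x₀ ≠ 0) (hsub : x t - x₀ ≠ 0) :
    HasDerivAt (fun s => eulerIntegral mp mm x₀ (x s) (y s)) 0 t := by
  refine (hasDerivAt_eulerIntegral hx hy hadd hsub).congr_deriv ?_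
  have hnadd : ‖x t + x₀‖ ≠ 0 := norm_ne_zero_iff.2 hadd
  have hnsub : ‖x t - x₀‖ ≠ 0 := norm_ne_zero_iff.2 hsub
  have hsqadd : ‖x t + x₀‖ ^ 2 = ‖x t‖ ^ 2 + 2 * ⟪x t, x₀⟫ + ‖x₀‖ ^ 2 := norm_add_sq_real _ _
  have hsqsub : ‖x t - x₀‖ ^ 2 = ‖x t‖ ^ 2 - 2 * ⟪x t, x₀⟫ + ‖x₀‖ ^ 2 := norm_sub_sq_real _ _
  simp only [twoCentreForce, inner_add_left, inner_add_right, inner_sub_left, inner_sub_right,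
    real_inner_smul_right, real_inner_self_eq_norm_sq, real_inner_comm (x t) (y t),
    real_inner_comm (x t) x₀, real_inner_comm x₀ (y t)]
  linear_combination (norm := skip) (2 * mp * ⟪x₀, y t⟫ / ‖x t + x₀‖ ^ 3) * hsqadd
    - (2 * mm * ⟪x₀, y t⟫ / ‖x t - x₀‖ ^ 3) * hsqsub
  field_simp
  ring

end InnerProductSpace

theorem EulerN_eq_eulerIntegral (mp mm : ℝ) (x₀ x y : EuclideanSpace ℝ (Fin 3)) :
    EulerN mp mm x₀ x y = eulerIntegral mp mm x₀ x y := by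
  rw [EulerN, eulerIntegral, norm_cross3_sq]

/-- along any solution of the two-centre problem, `𝒩(x(t),y(t))`
is constant. -/
theorem stmt_15 (mp mm : ℝ) (x₀ : EuclideanSpace ℝ (Fin 3))
    (J : Set ℝ) (hJ : Convex ℝ J)
    (x y : ℝ → EuclideanSpace ℝ (Fin 3))
    (hne : ∀ t ∈ J, x t ≠ -x₀ ∧ x t ≠ x₀)
    (hx : ∀ t ∈ J, HasDerivAt x (y t) t)
    (hy : ∀ t ∈ J, HasDerivAt y
      ((-mp / ‖x t + x₀‖ ^ 3) • (x t + x₀) + (-mm / ‖x t - x₀‖ ^ 3) • (x t - x₀)) t) :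
    ∀ s ∈ J, ∀ t ∈ J, EulerN mp mm x₀ (x s) (y s) = EulerN mp mm x₀ (x t) (y t) := by
  intro s hs t ht
  simp only [EulerN_eq_eulerIntegral]
  refine hJ.is_const_of_hasDerivAt_eq_zero (f := fun u => eulerIntegral mp mm x₀ (x u) (y u))
    (fun u hu => ?_) hs ht
  obtain ⟨hne_neg, hne_pos⟩ := hne u hu
  exact hasDerivAt_eulerIntegral_of_twoCentre (hx u hu) (hy u hu)
    (by rwa [Ne, add_eq_zero_iff_eq_neg]) (sub_ne_zero.2 hne_pos)
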